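/- arXiv:1705.07119 — 3 statements merged into one kernel-verified Lean document; each statement's English description precedes it below -/
import Mathlib

section
/- Every convex closed curve in the Euclidean plane (the boundary of a compact convex set with nonempty interior) can be realized as the equidistant set of two disjoint nonempty compact sets K and L, where K is a singleton. -/
open Metric Set EuclideanGeometry Filter

noncomputable section

abbrev Pl : Type := EuclideanSpace ℝ (Fin 2)

/-- The equidistant set of two focal sets. -/
def eqdist (K L : Set Pl) : Set Pl := {X | Metric.infDist X K = Metric.infDist X L}

/-- The line through two points. -/
def lineThrough (A B : Pl) : Set Pl := {X | ∃ t : ℝ, X = A + t • (B - A)}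

/-- `B` is the reflection of `O` (not on `ℓ`) across the line `ℓ`. -/
def IsReflection (ℓ : Set Pl) (O B : Pl) : Prop := B ≠ O ∧ ∀ Y ∈ ℓ, dist Y B = dist Y O

/-- `ℓ` is a supporting line of `P`. -/
def IsSupportLine (P ℓ : Set Pl) : Prop :=
  ∃ (f : Pl →L[ℝ] ℝ) (c : ℝ), f ≠ 0 ∧ (∀ x ∈ ℓ, f x = c) ∧ ∀ x ∈ P, f x ≤ c

theorem stmt_7 (C : Set Pl) (hC : IsCompact C) (hconv : Convex ℝ C)
    (hint : (interior C).Nonempty) :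
    ∃ (O : Pl) (L : Set Pl), IsCompact L ∧ L.Nonempty ∧ Disjoint ({O} : Set Pl) L ∧
      frontier C = eqdist {O} L := by
  classical
  obtain ⟨O, hO⟩ := hint
  obtain ⟨r₀, hr₀pos, hball⟩ := Metric.isOpen_iff.1 isOpen_interior O hO
  have hOC : O ∈ C := interior_subset hO
  have hCne : C.Nonempty := ⟨O, hOC⟩
  have hCclosed : IsClosed C := hC.isClosed
  set ρ : ℝ := r₀ / 2 with hρdef
  have hρ : 0 < ρ := by positivity
  -- support function
  set h : Pl → ℝ := fun n => sSup ((fun y => (inner ℝ (y - O) n : ℝ)) '' C) with hhdef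
  have hconti : ∀ n : Pl, Continuous (fun y : Pl => (inner ℝ (y - O) n : ℝ)) := fun n =>
    (continuous_id.sub continuous_const).inner continuous_const
  have himg : ∀ n : Pl, IsCompact ((fun y => (inner ℝ (y - O) n : ℝ)) '' C) := fun n =>
    hC.image (hconti n)
  have himgne : ∀ n : Pl, ((fun y => (inner ℝ (y - O) n : ℝ)) '' C).Nonempty := fun n =>
    hCne.image _
  have hub : ∀ (n : Pl), ∀ y ∈ C, (inner ℝ (y - O) n : ℝ) ≤ h n := fun n y hy =>
    le_csSup (himg n).bddAbove ⟨y, hy, rfl⟩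
  have hmax : ∀ n : Pl, ∃ y ∈ C, h n = (inner ℝ (y - O) n : ℝ) := by
    intro n
    have := (himg n).sSup_mem (himgne n)
    obtain ⟨y, hy, hval⟩ := this
    exact ⟨y, hy, hval.symm⟩
  have hρle : ∀ n : Pl, ‖n‖ = 1 → ρ ≤ h n := by
    intro n hn
    have hy : O + ρ • n ∈ C := by
      apply interior_subset (hball ?_)
      simp only [mem_ball, dist_eq_norm, add_sub_cancel_left, norm_smul, hn,
        Real.norm_eq_abs, mul_one, abs_of_pos hρ]
      linarith
    have := hub n _ hy
    have hinner : (inner ℝ (O + ρ • n - O) n : ℝ) = ρ := by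
      rw [add_sub_cancel_left, real_inner_smul_left, real_inner_self_eq_norm_sq, hn]
      ring
    linarith [hinner ▸ this]
  -- the key identity
  have key : ∀ (n : Pl), ‖n‖ = 1 → ∀ X : Pl,
      dist X (O + (2 * h n) • n) ^ 2 =
        dist X O ^ 2 + 4 * h n * (h n - (inner ℝ (X - O) n : ℝ)) := by
    intro n hn X
    have hrw : X - (O + (2 * h n) • n) = (X - O) - (2 * h n) • n := by abel
    rw [dist_eq_norm, dist_eq_norm, hrw, norm_sub_sq_real, real_inner_smul_right,
      norm_smul, Real.norm_eq_abs, hn, mul_one, sq_abs]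
    ring
  set g : Pl → Pl := fun n => O + (2 * h n) • n with hgdef
  set L : Set Pl := g '' sphere (0 : Pl) 1 with hLdef
  -- boundedness constant
  obtain ⟨R, hRsub⟩ := (Metric.isBounded_iff_subset_closedBall O).1 hC.isBounded
  have hR : ∀ y ∈ C, ‖y - O‖ ≤ R := by
    intro y hy
    have := hRsub hy
    rwa [mem_closedBall, dist_eq_norm] at this
  have hR0 : 0 ≤ R := by
    have := hR O hOC; simpa using this
  -- h is Lipschitz
  have hdiff : ∀ n m : Pl, h n - h m ≤ R * ‖n - m‖ := by
    intro n m
    obtain ⟨y, hy, hval⟩ := hmax n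
    have h1 : (inner ℝ (y - O) m : ℝ) ≤ h m := hub m y hy
    have h2 : (inner ℝ (y - O) (n - m) : ℝ) ≤ R * ‖n - m‖ := by
      calc (inner ℝ (y - O) (n - m) : ℝ) ≤ ‖y - O‖ * ‖n - m‖ := real_inner_le_norm _ _
        _ ≤ R * ‖n - m‖ := by
            apply mul_le_mul_of_nonneg_right (hR y hy) (norm_nonneg _)
    have h3 : (inner ℝ (y - O) (n - m) : ℝ) = inner ℝ (y - O) n - inner ℝ (y - O) m :=
      inner_sub_right _ _ _
    linarith [hval ▸ (le_refl (h n))]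
  have hlip : LipschitzWith (Real.toNNReal R) h := by
    apply LipschitzWith.of_dist_le_mul
    intro n m
    rw [Real.dist_eq, Real.coe_toNNReal R hR0, dist_eq_norm]
    rw [abs_sub_le_iff]
    constructor
    · exact hdiff n m
    · have := hdiff m n
      rwa [norm_sub_rev] at this
  have hcont : Continuous h := hlip.continuous
  have hgcont : Continuous g := by
    apply continuous_const.add
    exact ((continuous_const.mul hcont).smul continuous_id)
  have hLcompact : IsCompact L := (isCompact_sphere 0 1).image hgcont
  have hsne : (sphere (0 : Pl) 1).Nonempty := NormedSpace.sphere_nonempty.mpr zero_le_one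
  have hLne : L.Nonempty := hsne.image _
  -- disjointness
  have hdisj : Disjoint ({O} : Set Pl) L := by
    rw [Set.disjoint_singleton_left]
    rintro ⟨n, hn, hEq⟩
    rw [mem_sphere_zero_iff_norm] at hn
    have hnz : n ≠ 0 := by intro h0; rw [h0, norm_zero] at hn; norm_num at hn
    have : (2 * h n) • n = 0 := by
      have := hEq
      simp only [hgdef] at this
      have h2 : O + (2 * h n) • n - O = O - O := by rw [this]
      simpa using h2
    rcases smul_eq_zero.1 this with h1 | h2
    · have := hρle n hn
      have : (0:ℝ) < 2 * h n := by linarith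
      linarith [h1 ▸ this]
    · exact hnz h2
  -- C ⊆ closure (interior C)
  have hCsub : C ⊆ closure (interior C) := by
    intro y hy
    have htend : Tendsto (fun t : ℝ => y + t • (O - y)) (nhdsWithin 0 (Ioo (0:ℝ) 1)) (nhds y) := by
      have : Continuous (fun t : ℝ => y + t • (O - y)) :=
        continuous_const.add (continuous_id.smul continuous_const)
      have h0 : Tendsto (fun t : ℝ => y + t • (O - y)) (nhds 0) (nhds y) := by
        have := this.tendsto 0
        simpa using this
      exact h0.mono_left nhdsWithin_le_nhds
    have hne : (nhdsWithin (0:ℝ) (Ioo 0 1)).NeBot := by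
      apply mem_closure_iff_nhdsWithin_neBot.1
      rw [closure_Ioo (by norm_num : (0:ℝ) ≠ 1)]
      exact ⟨le_refl 0, by norm_num⟩
    refine mem_closure_of_tendsto htend ?_
    filter_upwards [self_mem_nhdsWithin] with t ht
    obtain ⟨ht0, ht1⟩ := ht
    have : (1 - t) • y + t • O ∈ interior C :=
      hconv.combo_self_interior_mem_interior hy hO (by linarith) ht0 (by ring)
    have heq : y + t • (O - y) = (1 - t) • y + t • O := by
      rw [smul_sub, sub_smul, one_smul]; abel
    rwa [heq]
  -- construction of the normal vector from a functional
  have mk_normal : ∀ (f : Pl →L[ℝ] ℝ), f ≠ 0 → ∃ n : Pl, ‖n‖ = 1 ∧ ∃ c : ℝ, 0 < c ∧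
      ∀ x y : Pl, (inner ℝ (x - y) n : ℝ) = c * (f x - f y) := by
    intro f hf
    set v := (InnerProductSpace.toDual ℝ Pl).symm f with hvdef
    have hv : ∀ x : Pl, (inner ℝ v x : ℝ) = f x := fun x => InnerProductSpace.toDual_symm_apply
    have hvne : v ≠ 0 := by
      intro h0
      apply hf
      ext x
      have := hv x
      rw [h0] at this
      simpa using this.symm
    refine ⟨‖v‖⁻¹ • v, norm_smul_inv_norm hvne, ‖v‖⁻¹, inv_pos.2 (norm_pos_iff.2 hvne), ?_⟩
    intro x y
    rw [real_inner_comm, real_inner_smul_left, inner_sub_right, hv, hv]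
  -- now the main equality
  refine ⟨O, L, hLcompact, hLne, hdisj, ?_⟩
  ext X
  simp only [eqdist, mem_setOf_eq, Metric.infDist_singleton]
  obtain ⟨B₀, hB₀L, hB₀⟩ := hLcompact.exists_infDist_eq_dist hLne X
  constructor
  · intro hX
    rw [hCclosed.frontier_eq] at hX
    obtain ⟨hXC, hXnotint⟩ := hX
    -- lower bound
    have hlow : ∀ B ∈ L, dist X O ≤ dist X B := by
      rintro B ⟨n, hn, rfl⟩
      rw [mem_sphere_zero_iff_norm] at hn
      have hid := key n hn X
      have h1 : (inner ℝ (X - O) n : ℝ) ≤ h n := hub n X hXC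
      have h2 : ρ ≤ h n := hρle n hn
      have hsq : dist X O ^ 2 ≤ dist X (g n) ^ 2 := by
        simp only [hgdef]
        nlinarith
      exact (pow_le_pow_iff_left₀ dist_nonneg dist_nonneg (by norm_num)).1 hsq
    have hge : dist X O ≤ infDist X L := by rw [hB₀]; exact hlow B₀ hB₀L
    -- support line at X
    obtain ⟨f, hf⟩ := geometric_hahn_banach_open_point hconv.interior isOpen_interior hXnotint
    have hfne : f ≠ 0 := by
      intro h0
      have := hf O hO
      rw [h0] at this
      simp at this
    have hfC : ∀ y ∈ C, f y ≤ f X := by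
      intro y hy
      have hclosed : IsClosed {z : Pl | f z ≤ f X} := isClosed_le f.continuous continuous_const
      have hsub2 : interior C ⊆ {z : Pl | f z ≤ f X} := fun a ha => (hf a ha).le
      exact closure_minimal hsub2 hclosed (hCsub hy)
    obtain ⟨n, hn1, c, hc, hcf⟩ := mk_normal f hfne
    have hsup : ∀ y ∈ C, (inner ℝ (y - O) n : ℝ) ≤ inner ℝ (X - O) n := by
      intro y hy
      rw [hcf y O, hcf X O]
      have := hfC y hy
      nlinarith
    have hXh : h n = (inner ℝ (X - O) n : ℝ) := by
      apply le_antisymm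
      · apply csSup_le (himgne n)
        rintro z ⟨y, hy, rfl⟩
        exact hsup y hy
      · exact hub n X hXC
    have hdisteq : dist X (g n) = dist X O := by
      have hid := key n hn1 X
      have : dist X (g n) ^ 2 = dist X O ^ 2 := by
        simp only [hgdef]; rw [hid, hXh]; ring
      have := (pow_le_pow_iff_left₀ (dist_nonneg (x := X) (y := g n)) dist_nonneg
        (two_ne_zero)).1 this.le
      have h2 := (pow_le_pow_iff_left₀ (dist_nonneg (x := X) (y := O))
        (dist_nonneg (x := X) (y := g n)) (two_ne_zero)).1 (by
          simp only [hgdef] at *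
          rw [hid, hXh]; nlinarith : dist X O ^ 2 ≤ dist X (g n) ^ 2)
      linarith
    have hle : infDist X L ≤ dist X O := by
      rw [← hdisteq]
      exact infDist_le_dist_of_mem ⟨n, mem_sphere_zero_iff_norm.2 hn1, rfl⟩
    linarith
  · intro hEq
    by_contra hXf
    rw [hCclosed.frontier_eq] at hXf
    by_cases hXC : X ∈ C
    · -- X is in the interior
      have hXint : X ∈ interior C := by
        by_contra h2
        exact hXf ⟨hXC, h2⟩
      obtain ⟨r, hrpos, hrball⟩ := Metric.isOpen_iff.1 isOpen_interior X hXint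
      obtain ⟨n, hn, hB₀eq⟩ := hB₀L
      rw [mem_sphere_zero_iff_norm] at hn
      have hsep : (inner ℝ (X - O) n : ℝ) ≤ h n - r / 2 := by
        have hy : X + (r / 2) • n ∈ C := by
          apply interior_subset (hrball ?_)
          simp only [mem_ball, dist_eq_norm, add_sub_cancel_left, norm_smul, hn,
            Real.norm_eq_abs, mul_one, abs_of_pos (by positivity : (0:ℝ) < r / 2)]
          linarith
        have := hub n _ hy
        have hinner : (inner ℝ (X + (r / 2) • n - O) n : ℝ) =
            (inner ℝ (X - O) n : ℝ) + r / 2 := by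
          have hrw : X + (r / 2) • n - O = (X - O) + (r / 2) • n := by abel
          rw [hrw, inner_add_left, real_inner_smul_left, real_inner_self_eq_norm_sq, hn]
          ring
        linarith [hinner ▸ this]
      have hid := key n hn X
      have hρn := hρle n hn
      have hlt : dist X O ^ 2 < dist X B₀ ^ 2 := by
        rw [← hB₀eq]
        simp only [hgdef]
        nlinarith
      rw [hEq, hB₀] at hlt
      exact lt_irrefl _ hlt
    · -- X is outside C
      obtain ⟨f, u, hfu, hux⟩ := geometric_hahn_banach_closed_point hconv hCclosed hXC
      have hfne : f ≠ 0 := by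
        intro h0
        have h1 := hfu O hOC
        rw [h0] at h1 hux
        simp at h1 hux
        linarith
      obtain ⟨n, hn1, c, hc, hcf⟩ := mk_normal f hfne
      have hlt : h n < (inner ℝ (X - O) n : ℝ) := by
        obtain ⟨y, hy, hval⟩ := hmax n
        rw [hval, hcf y O, hcf X O]
        have h1 : f y < u := hfu y hy
        nlinarith
      have hρn := hρle n hn1
      have hid := key n hn1 X
      have hfac : 4 * h n * (h n - (inner ℝ (X - O) n : ℝ)) < 0 :=
        mul_neg_of_pos_of_neg (by linarith) (by linarith)
      have hltd : dist X (g n) ^ 2 < dist X O ^ 2 := by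
        simp only [hgdef]
        linarith [hid]
      have hless : dist X (g n) < dist X O :=
        lt_of_pow_lt_pow_left₀ 2 dist_nonneg hltd
      have hle : infDist X L ≤ dist X (g n) :=
        infDist_le_dist_of_mem ⟨n, mem_sphere_zero_iff_norm.2 hn1, rfl⟩
      rw [← hEq] at hle
      linarith
end
end

section
/- Every convex closed curve in the Euclidean plane can be realized as the equidistant set of two disjoint connected closed sets K and M, with K a singleton and M a connected closed curve. -/
open Metric Set EuclideanGeometry Filter

noncomputable section

open scoped RealInnerProductSpace

/-- The focal set `M`: all points `Z` with `dist Z X ≥ dist X O` for every `X ∈ C`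
(equivalently, `Z` avoids every open ball `B(X, |XO|)`), excluding a neighborhood of the
isolated point `O` itself. -/
def Mset (C : Set Pl) (O : Pl) (ρ : ℝ) : Set Pl :=
  {Z | ρ ≤ ‖Z - O‖ ∧ ∀ X ∈ C, 2 * ⟪Z - O, X - O⟫ ≤ ‖Z - O‖ ^ 2}

lemma dist_cond_iff (O Z X : Pl) :
    dist X O ≤ dist Z X ↔ 2 * ⟪Z - O, X - O⟫ ≤ ‖Z - O‖ ^ 2 := by
  rw [dist_eq_norm, dist_eq_norm]
  have h : Z - X = (Z - O) - (X - O) := by abel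
  have h2 : ‖Z - X‖ ^ 2 = ‖Z - O‖ ^ 2 - 2 * ⟪Z - O, X - O⟫ + ‖X - O‖ ^ 2 := by
    rw [h, norm_sub_sq_real]
  constructor
  · intro hle
    have := pow_le_pow_left₀ (norm_nonneg (X - O)) hle 2
    nlinarith
  · intro hle
    nlinarith [norm_nonneg (X - O), norm_nonneg (Z - X)]

lemma Mset_closed (C : Set Pl) (O : Pl) (ρ : ℝ) : IsClosed (Mset C O ρ) := by
  have h1 : IsClosed {Z : Pl | ρ ≤ ‖Z - O‖} :=
    isClosed_le continuous_const ((continuous_id.sub continuous_const).norm)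
  have h2 : IsClosed {Z : Pl | ∀ X ∈ C, 2 * ⟪Z - O, X - O⟫ ≤ ‖Z - O‖ ^ 2} := by
    have he : {Z : Pl | ∀ X ∈ C, 2 * ⟪Z - O, X - O⟫ ≤ ‖Z - O‖ ^ 2}
        = ⋂ X ∈ C, {Z : Pl | 2 * ⟪Z - O, X - O⟫ ≤ ‖Z - O‖ ^ 2} := by
      ext Z; simp
    rw [he]
    refine isClosed_biInter fun X _ => isClosed_le ?_ ?_
    · exact continuous_const.mul
        (Continuous.inner (continuous_id.sub continuous_const) continuous_const)
    · exact ((continuous_id.sub continuous_const).norm.pow 2)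
  have : Mset C O ρ = {Z : Pl | ρ ≤ ‖Z - O‖} ∩
      {Z : Pl | ∀ X ∈ C, 2 * ⟪Z - O, X - O⟫ ≤ ‖Z - O‖ ^ 2} := rfl
  rw [this]; exact h1.inter h2

lemma memM {C : Set Pl} {O : Pl} {ρ : ℝ} (hρC : closedBall O ρ ⊆ C) (hρ : 0 < ρ)
    (u P : Pl) (hu : ‖u‖ = 1) (hsupp : ∀ X ∈ C, ⟪X - P, u⟫ ≤ 0) :
    ρ ≤ ⟪P - O, u⟫ ∧ O + (2 * ⟪P - O, u⟫) • u ∈ Mset C O ρ := by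
  set t : ℝ := ⟪P - O, u⟫ with ht_def
  have hρu : O + ρ • u ∈ C := by
    apply hρC
    simp [mem_closedBall, dist_eq_norm, norm_smul, hu, abs_of_pos hρ]
  have ht : ρ ≤ t := by
    have h1 := hsupp _ hρu
    have h2 : O + ρ • u - P = ρ • u - (P - O) := by abel
    rw [h2, inner_sub_left, real_inner_smul_left, real_inner_self_eq_norm_sq, hu,
      one_pow, mul_one] at h1
    linarith
  have h2t : (0:ℝ) ≤ 2 * t := by linarith
  have hz : O + (2 * t) • u - O = (2 * t) • u := by abel
  have hzn : ‖(2 * t) • u‖ = 2 * t := by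
    rw [norm_smul, hu, mul_one, Real.norm_eq_abs, abs_of_nonneg h2t]
  refine ⟨ht, ⟨by rw [hz, hzn]; linarith, fun X hX => ?_⟩⟩
  have h3 := hsupp X hX
  have h4 : X - P = (X - O) - (P - O) := by abel
  rw [h4, inner_sub_left] at h3
  rw [hz, hzn, real_inner_smul_left]
  have h5 : ⟪u, X - O⟫ = ⟪X - O, u⟫ := real_inner_comm _ _
  rw [h5]
  nlinarith [h3, ht, hρ]

lemma sphere_subset_M {C : Set Pl} {O : Pl} {ρ B R : ℝ}
    (hXB : ∀ X ∈ C, ‖X - O‖ ≤ B) (hR1 : 2 * B ≤ R) (hR2 : ρ ≤ R) (hR0 : 0 ≤ R) :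
    sphere O R ⊆ Mset C O ρ := by
  intro Z hZ
  have hZn : ‖Z - O‖ = R := by rwa [Metric.mem_sphere, dist_eq_norm] at hZ
  refine ⟨by rw [hZn]; exact hR2, fun X hX => ?_⟩
  have h1 : ⟪Z - O, X - O⟫ ≤ ‖Z - O‖ * ‖X - O‖ := real_inner_le_norm _ _
  have h2 := hXB X hX
  rw [hZn] at h1
  rw [hZn]
  nlinarith [norm_nonneg (X - O)]

lemma ray_subset_M {C : Set Pl} {O : Pl} {ρ : ℝ} {Z : Pl}
    (hZ : Z ∈ Mset C O ρ) {lam : ℝ} (hlam : 1 ≤ lam) : O + lam • (Z - O) ∈ Mset C O ρ := by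
  obtain ⟨h1, h2⟩ := hZ
  have hlam0 : (0:ℝ) ≤ lam := by linarith
  have hz : O + lam • (Z - O) - O = lam • (Z - O) := by abel
  have hzn : ‖lam • (Z - O)‖ = lam * ‖Z - O‖ := by
    rw [norm_smul, Real.norm_eq_abs, abs_of_nonneg hlam0]
  constructor
  · rw [hz, hzn]; nlinarith [norm_nonneg (Z - O)]
  · intro X hX
    have h3 := h2 X hX
    rw [hz, real_inner_smul_left, hzn, mul_pow]
    nlinarith [mul_le_mul_of_nonneg_left h3 hlam0,
      mul_nonneg (by nlinarith : (0:ℝ) ≤ lam^2 - lam) (sq_nonneg ‖Z - O‖)]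

lemma rank_Pl : 1 < Module.rank ℝ Pl := by
  rw [← Module.finrank_eq_rank]
  norm_cast
  rw [finrank_euclideanSpace_fin]
  norm_num

lemma M_nonempty {C : Set Pl} {O : Pl} {ρ B : ℝ} (hρ : 0 < ρ) (hB : 0 ≤ B)
    (hXB : ∀ X ∈ C, ‖X - O‖ ≤ B) : (Mset C O ρ).Nonempty := by
  have h1 : (sphere O (2*B + ρ)).Nonempty :=
    NormedSpace.sphere_nonempty.mpr (by positivity)
  exact h1.imp (fun z hz => sphere_subset_M hXB (by linarith) (by linarith) (by positivity) hz)

lemma M_connected {C : Set Pl} {O : Pl} {ρ B : ℝ} (hρ : 0 < ρ) (hB : 0 ≤ B)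
    (hXB : ∀ X ∈ C, ‖X - O‖ ≤ B) : IsConnected (Mset C O ρ) := by
  refine ⟨M_nonempty hρ hB hXB, isPreconnected_of_forall_pair ?_⟩
  intro x hx y hy
  set R : ℝ := max (2*B + ρ) (max ‖x - O‖ ‖y - O‖) with hR_def
  have hR0 : 0 < R := lt_of_lt_of_le (by positivity) (le_max_left _ _)
  have hRB : 2 * B ≤ R := le_trans (by linarith) (le_max_left _ _)
  have hRρ : ρ ≤ R := le_trans (by linarith) (le_max_left _ _)
  have hRx : ‖x - O‖ ≤ R := le_trans (le_max_left _ _) (le_max_right _ _)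
  have hRy : ‖y - O‖ ≤ R := le_trans (le_max_right _ _) (le_max_right _ _)
  have hxn : 0 < ‖x - O‖ := lt_of_lt_of_le hρ hx.1
  have hyn : 0 < ‖y - O‖ := lt_of_lt_of_le hρ hy.1
  have hsub : sphere O R ⊆ Mset C O ρ := sphere_subset_M hXB hRB hRρ hR0.le
  set rayx : Set Pl := (fun lam : ℝ => O + lam • (x - O)) '' Ici 1 with hrayx_def
  set rayy : Set Pl := (fun lam : ℝ => O + lam • (y - O)) '' Ici 1 with hrayy_def
  have hraysub : ∀ z ∈ Mset C O ρ, (fun lam : ℝ => O + lam • (z - O)) '' Ici 1 ⊆ Mset C O ρ := by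
    rintro z hz _ ⟨lam, hlam, rfl⟩
    exact ray_subset_M hz hlam
  have hraypc : ∀ z : Pl, IsPreconnected ((fun lam : ℝ => O + lam • (z - O)) '' Ici 1) :=
    fun z => isPreconnected_Ici.image _
      ((continuous_const.add (continuous_id.smul continuous_const)).continuousOn)
  have hspherepoint : ∀ z : Pl, 0 < ‖z - O‖ → ‖z - O‖ ≤ R →
      O + (R / ‖z - O‖) • (z - O) ∈ (fun lam : ℝ => O + lam • (z - O)) '' Ici 1 ∩ sphere O R := by
    intro z hzn hzR
    constructor
    · exact ⟨R / ‖z - O‖, mem_Ici.mpr ((one_le_div hzn).mpr hzR), rfl⟩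
    · rw [Metric.mem_sphere, dist_eq_norm]
      have h2 : O + (R / ‖z - O‖) • (z - O) - O = (R / ‖z - O‖) • (z - O) := by abel
      rw [h2, norm_smul, Real.norm_eq_abs, abs_of_nonneg (by positivity),
        div_mul_cancel₀ _ hzn.ne']
  have hpx := hspherepoint x hxn hRx
  have hpy := hspherepoint y hyn hRy
  refine ⟨rayx ∪ (sphere O R ∪ rayy), ?_, ?_, ?_, ?_⟩
  · refine union_subset (hraysub x hx) (union_subset hsub (hraysub y hy))
  · left
    exact ⟨1, mem_Ici.mpr le_rfl, by simp⟩
  · right; right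
    exact ⟨1, mem_Ici.mpr le_rfl, by simp⟩
  · refine IsPreconnected.union (O + (R / ‖x - O‖) • (x - O)) hpx.1 (Or.inl hpx.2)
      (hraypc x) ?_
    exact IsPreconnected.union (O + (R / ‖y - O‖) • (y - O)) hpy.2 hpy.1
      ((isConnected_sphere rank_Pl O hR0.le).isPreconnected) (hraypc y)

/-- variational inequality for the metric projection -/
lemma proj_var {C : Set Pl} (hconv : Convex ℝ C) {Y P : Pl} (hPC : P ∈ C)
    (hPd : ∀ W ∈ C, dist Y P ≤ dist Y W) : ∀ X ∈ C, ⟪Y - P, X - P⟫ ≤ 0 := by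
  intro X hX
  by_contra hcon
  push_neg at hcon
  set c : ℝ := ⟪Y - P, X - P⟫ with hc_def
  have hXP : X - P ≠ 0 := by
    intro h
    rw [hc_def, h, inner_zero_right] at hcon
    exact lt_irrefl 0 hcon
  have hb : (0:ℝ) < ‖X - P‖ ^ 2 := pow_pos (norm_pos_iff.mpr hXP) 2
  set θ : ℝ := min 1 (c / ‖X - P‖ ^ 2) with hθ_def
  have hθ0 : 0 < θ := lt_min one_pos (div_pos hcon hb)
  have hθ1 : θ ≤ 1 := min_le_left _ _
  have hθc : θ * ‖X - P‖ ^ 2 ≤ c := by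
    have := min_le_right 1 (c / ‖X - P‖ ^ 2)
    calc θ * ‖X - P‖ ^ 2 ≤ (c / ‖X - P‖ ^ 2) * ‖X - P‖ ^ 2 :=
          mul_le_mul_of_nonneg_right this hb.le
      _ = c := div_mul_cancel₀ c hb.ne'
  have hW : P + θ • (X - P) ∈ C := by
    have h1 := hconv hPC hX (by linarith : (0:ℝ) ≤ 1 - θ) hθ0.le (by ring)
    have h2 : (1 - θ) • P + θ • X = P + θ • (X - P) := by
      rw [sub_smul, one_smul, smul_sub]; abel
    rwa [h2] at h1
  have hle := hPd _ hW
  rw [dist_eq_norm, dist_eq_norm] at hle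
  have hYW : Y - (P + θ • (X - P)) = (Y - P) - θ • (X - P) := by abel
  rw [hYW] at hle
  have hexp : ‖(Y - P) - θ • (X - P)‖ ^ 2
      = ‖Y - P‖ ^ 2 - 2 * (θ * c) + θ ^ 2 * ‖X - P‖ ^ 2 := by
    rw [norm_sub_sq_real, real_inner_smul_right, norm_smul, Real.norm_eq_abs, mul_pow, sq_abs]
  have hsq := pow_le_pow_left₀ (norm_nonneg (Y - P)) hle 2
  rw [hexp] at hsq
  nlinarith [hθc, hθ0, hcon]

lemma ext_lt {C : Set Pl} (hC : IsCompact C) (hconv : Convex ℝ C)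
    {O : Pl} {ρ : ℝ} (hρC : closedBall O ρ ⊆ C) (hρ : 0 < ρ)
    {Y : Pl} (hY : Y ∉ C) : infDist Y (Mset C O ρ) < dist Y O := by
  have hCne : C.Nonempty := ⟨O, hρC (mem_closedBall_self hρ.le)⟩
  obtain ⟨P, hPC, hPd⟩ := hC.exists_infDist_eq_dist hCne Y
  have hYP : Y - P ≠ 0 := sub_ne_zero.mpr (fun h => hY (h ▸ hPC))
  have hvar := proj_var hconv hPC (fun W hW => hPd ▸ infDist_le_dist_of_mem hW)
  set u : Pl := ‖Y - P‖⁻¹ • (Y - P) with hu_def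
  have hu : ‖u‖ = 1 := norm_smul_inv_norm (𝕜 := ℝ) hYP
  have hsupp : ∀ X ∈ C, ⟪X - P, u⟫ ≤ 0 := by
    intro X hX
    rw [hu_def, real_inner_smul_right]
    have := hvar X hX
    rw [real_inner_comm] at this
    exact mul_nonpos_of_nonneg_of_nonpos (by positivity) this
  obtain ⟨ht, hZM⟩ := memM hρC hρ u P hu hsupp
  set t : ℝ := ⟪P - O, u⟫ with ht_def
  set s : ℝ := dist Y P with hs_def
  have hs0 : 0 < s := dist_pos.mpr (fun h => hYP (sub_eq_zero.mpr h))
  have hsu : s • u = Y - P := by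
    rw [hs_def, dist_eq_norm, hu_def, smul_smul, mul_inv_cancel₀ (norm_ne_zero_iff.mpr hYP),
      one_smul]
  have e1 : ∀ a : ℝ, ‖(P - O) + a • u‖ ^ 2 = ‖P - O‖ ^ 2 + 2 * (a * t) + a ^ 2 := by
    intro a
    rw [norm_add_sq_real, real_inner_smul_right, norm_smul, Real.norm_eq_abs, mul_pow, sq_abs,
      hu, one_pow, mul_one, ← ht_def]
  have hYO : Y - O = (P - O) + s • u := by rw [hsu]; abel
  have hYZ : Y - (O + (2 * t) • u) = (P - O) + (s - 2*t) • u := by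
    rw [sub_smul, hsu]; abel
  have hd1 : dist Y (O + (2 * t) • u) ^ 2 = ‖P - O‖ ^ 2 + 2 * ((s - 2*t) * t) + (s - 2*t) ^ 2 := by
    rw [dist_eq_norm, hYZ, e1]
  have hd2 : dist Y O ^ 2 = ‖P - O‖ ^ 2 + 2 * (s * t) + s ^ 2 := by
    rw [dist_eq_norm, hYO, e1]
  have hlt : dist Y (O + (2 * t) • u) < dist Y O := by
    nlinarith [dist_nonneg (x := Y) (y := O + (2 * t) • u), dist_nonneg (x := Y) (y := O),
      hs0, ht, hρ]
  exact lt_of_le_of_lt (infDist_le_dist_of_mem hZM) hlt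

lemma int_gt {C : Set Pl} {O : Pl} {ρ : ℝ} (hρ : 0 < ρ) (hMne : (Mset C O ρ).Nonempty)
    {Y : Pl} (hY : Y ∈ interior C) : dist Y O < infDist Y (Mset C O ρ) := by
  by_contra hcon
  push_neg at hcon
  obtain ⟨Z, hZM, hZd⟩ := (Mset_closed C O ρ).exists_infDist_eq_dist hMne Y
  set d : ℝ := dist Y Z with hd_def
  have hdle : d ≤ dist Y O := hZd ▸ hcon
  have hYC : Y ∈ C := interior_subset hY
  have hd0 : 0 < d := by
    rcases eq_or_lt_of_le (dist_nonneg : (0:ℝ) ≤ dist Y Z) with h | h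
    · exfalso
      have hZY : Y = Z := dist_eq_zero.mp h.symm
      subst hZY
      have h2 := hZM.2 Y hYC
      rw [real_inner_self_eq_norm_sq] at h2
      nlinarith [hZM.1, hρ]
    · exact h
  obtain ⟨ε2, hε2, hb2⟩ := Metric.isOpen_iff.mp isOpen_interior Y hY
  set s : ℝ := min (ε2/2) d with hs_def
  have hs0 : 0 < s := lt_min (by linarith) hd0
  have hsd : s ≤ d := min_le_right _ _
  have hsε : s < ε2 := lt_of_le_of_lt (min_le_left _ _) (by linarith)
  have hZY : Z - Y ≠ 0 := by
    intro h
    exact (dist_pos.mp hd0) (sub_eq_zero.mp h).symm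
  set w : Pl := d⁻¹ • (Z - Y) with hw_def
  have hZYn : ‖Z - Y‖ = d := by rw [← dist_eq_norm, dist_comm]
  have hw : ‖w‖ = 1 := by
    rw [hw_def, norm_smul, Real.norm_eq_abs, abs_of_nonneg (inv_nonneg.mpr hd0.le), hZYn,
      inv_mul_cancel₀ hd0.ne']
  have hdw : d • w = Z - Y := by
    rw [hw_def, smul_smul, mul_inv_cancel₀ hd0.ne', one_smul]
  set X : Pl := Y + s • w with hX_def
  have hXC : X ∈ C := by
    apply interior_subset (hb2 _)
    rw [mem_ball, hX_def, dist_eq_norm]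
    have : Y + s • w - Y = s • w := by abel
    rw [this, norm_smul, Real.norm_eq_abs, abs_of_nonneg hs0.le, hw, mul_one]
    exact hsε
  have h1 : dist X O ≤ dist Z X := (dist_cond_iff O Z X).mpr (hZM.2 X hXC)
  have h2 : dist Z X = d - s := by
    have hZX : Z - X = (d - s) • w := by rw [sub_smul, hdw, hX_def]; abel
    rw [dist_eq_norm, hZX, norm_smul, Real.norm_eq_abs, abs_of_nonneg (by linarith), hw, mul_one]
  have hYX : dist Y X = s := by
    rw [dist_eq_norm, hX_def]
    have : Y - (Y + s • w) = (-s) • w := by rw [neg_smul]; abel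
    rw [this, norm_smul, Real.norm_eq_abs, abs_neg, abs_of_nonneg hs0.le, hw, mul_one]
  have hYOd : dist Y O = d := by
    have := dist_triangle Y X O
    linarith [h1, h2, hYX, hdle]
  have hXOd : dist X O = d - s := by
    have := dist_triangle Y X O
    linarith [h1, h2, hYX, hdle]
  set q : ℝ := ⟪Y - O, w⟫ with hq_def
  have e : ∀ a : ℝ, ‖(Y - O) + a • w‖ ^ 2 = ‖Y - O‖ ^ 2 + 2 * (a * q) + a ^ 2 := by
    intro a
    rw [norm_add_sq_real, real_inner_smul_right, norm_smul, Real.norm_eq_abs, mul_pow, sq_abs,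
      hw, one_pow, mul_one, ← hq_def]
  have hXO2 : (d - s) ^ 2 = d ^ 2 + 2 * (s * q) + s ^ 2 := by
    have hXOv : X - O = (Y - O) + s • w := by rw [hX_def]; abel
    have := e s
    rw [← hXOv] at this
    rw [← dist_eq_norm] at this
    rw [hXOd] at this
    rw [this]
    rw [← hYOd, dist_eq_norm]
  have hq : q = -d := by
    have h5 : s * (q + d) = 0 := by linear_combination (-1/2) * hXO2
    rcases mul_eq_zero.mp h5 with h | h
    · exact absurd h hs0.ne'
    · linarith
  have hZO2 : ‖Z - O‖ ^ 2 = ‖Y - O‖ ^ 2 + 2 * (d * q) + d ^ 2 := by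
    have hZOv : Z - O = (Y - O) + d • w := by rw [hdw]; abel
    rw [hZOv, e]
  rw [hq, ← dist_eq_norm Y O, hYOd] at hZO2
  nlinarith [hZM.1, hρ, hZO2]

theorem stmt_18 (C : Set Pl) (hC : IsCompact C) (hconv : Convex ℝ C)
    (hint : (interior C).Nonempty) :
    ∃ (O : Pl) (M : Set Pl), IsClosed M ∧ IsConnected M ∧
      Disjoint ({O} : Set Pl) M ∧ frontier C = eqdist {O} M := by
  obtain ⟨O, hO⟩ := hint
  obtain ⟨ε, hε, hballint⟩ := Metric.isOpen_iff.mp isOpen_interior O hO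
  have hρ : 0 < ε/2 := by linarith
  have hρC : closedBall O (ε/2) ⊆ C := by
    intro x hx
    apply interior_subset (hballint _)
    rw [mem_ball]
    rw [mem_closedBall] at hx
    linarith
  have hCcl : IsClosed C := hC.isClosed
  obtain ⟨B0, hB0⟩ := hC.isBounded.subset_closedBall O
  have hB : (0:ℝ) ≤ max B0 0 := le_max_right _ _
  have hXB : ∀ X ∈ C, ‖X - O‖ ≤ max B0 0 := by
    intro X hX
    have h := hB0 hX
    rw [mem_closedBall, dist_eq_norm] at h
    exact le_trans h (le_max_left _ _)
  set M : Set Pl := Mset C O (ε/2) with hM_def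
  have hMcl := Mset_closed C O (ε/2)
  have hMne : M.Nonempty := M_nonempty hρ hB hXB
  have hlow : ∀ X ∈ C, dist X O ≤ infDist X M := by
    intro X hX
    by_contra h
    push_neg at h
    obtain ⟨Z, hZM, hd⟩ := (infDist_lt_iff hMne).mp h
    have h1 : dist X O ≤ dist Z X := (dist_cond_iff O Z X).mpr (hZM.2 X hX)
    rw [dist_comm Z X] at h1
    linarith
  have hext : ∀ Y, Y ∉ C → infDist Y M < dist Y O := fun Y hY => ext_lt hC hconv hρC hρ hY
  have hbdup : ∀ X ∈ frontier C, infDist X M ≤ dist X O := by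
    intro X hX
    have hXcl : X ∈ closure Cᶜ := by
      rw [frontier_eq_closure_inter_closure] at hX
      exact hX.2
    refine le_of_forall_pos_le_add ?_
    intro δ hδ
    obtain ⟨Y, hYc, hYd⟩ := Metric.mem_closure_iff.mp hXcl (δ/2) (by linarith)
    have h5 := hext Y hYc
    have h6 : infDist X M ≤ infDist Y M + dist X Y := infDist_le_infDist_add_dist
    have h7 : dist Y O ≤ dist Y X + dist X O := dist_triangle _ _ _
    rw [dist_comm Y X] at h7
    linarith
  refine ⟨O, M, hMcl, M_connected hρ hB hXB, ?_, ?_⟩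
  · rw [Set.disjoint_singleton_left]
    intro hOM
    have h := hOM.1
    simp only [sub_self, norm_zero] at h
    linarith
  · ext Y
    simp only [eqdist, mem_setOf_eq, infDist_singleton]
    constructor
    · intro hY
      have hYC : Y ∈ C := by
        rw [hCcl.frontier_eq] at hY; exact hY.1
      exact le_antisymm (hlow Y hYC) (hbdup Y hY)
    · intro hY
      rw [hCcl.frontier_eq]
      constructor
      · by_contra h
        have := hext Y h
        linarith
      · intro h
        have := int_gt hρ hMne h
        linarith
end
end

section
/- Let O be a point, ℓ a line not through O, B the reflection of O across ℓ, and A, A' points on ℓ. Then every circle centered at a point X ∈ ℓ passing through B also passes through O, and if X lies on the segment between A and A' on ℓ, then the circle centered at X through B (equivalently through O) is contained in the union of the two closed disks centered at A and A' with radius d(A,B) = d(A,O) and d(A',B) = d(A',O) respectively. -/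
open Metric Set EuclideanGeometry Filter

noncomputable section

theorem stmt_19 (O A A' B X : Pl) (hAA' : A ≠ A')
    (hO : O ∉ lineThrough A A')
    (hB : IsReflection (lineThrough A A') O B)
    (hX : X ∈ segment ℝ A A') :
    dist X B = dist X O ∧
      Metric.sphere X (dist X B) ⊆
        Metric.closedBall A (dist A B) ∪ Metric.closedBall A' (dist A' B) := by
  obtain ⟨a, b, ha, hb, hab, hXdef⟩ := hX
  have hXA : X - A = b • (A' - A) := by
    rw [← hXdef, show a = 1 - b by linarith]
    module
  have hXA' : X - A' = (b - 1) • (A' - A) := by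
    rw [← hXdef, show a = 1 - b by linarith]
    module
  have hmem : X ∈ lineThrough A A' := ⟨b, by rw [← hXA]; abel⟩
  have h1 : dist X B = dist X O := hB.2 X hmem
  refine ⟨h1, ?_⟩
  intro P hP
  rw [Metric.mem_sphere] at hP
  have hPX : ‖P - X‖ = ‖B - X‖ := by
    rw [← dist_eq_norm, ← dist_eq_norm, hP, dist_comm]
  have key : ∀ Q : Pl, ‖P - Q‖ ^ 2 - ‖B - Q‖ ^ 2 =
      2 * inner ℝ (P - B) (X - Q) := by
    intro Q
    have e1 : ‖P - Q‖ ^ 2 = ‖P - X‖ ^ 2 + 2 * inner ℝ (P - X) (X - Q) + ‖X - Q‖ ^ 2 := by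
      rw [show P - Q = (P - X) + (X - Q) by abel]
      rw [norm_add_sq_real]
    have e2 : ‖B - Q‖ ^ 2 = ‖B - X‖ ^ 2 + 2 * inner ℝ (B - X) (X - Q) + ‖X - Q‖ ^ 2 := by
      rw [show B - Q = (B - X) + (X - Q) by abel]
      rw [norm_add_sq_real]
    have e3 : (inner ℝ (P - B) (X - Q) : ℝ) = inner ℝ (P - X) (X - Q) - inner ℝ (B - X) (X - Q) := by
      rw [← inner_sub_left, show P - X - (B - X) = P - B by abel]
    rw [e1, e2, hPX, e3]; ring
  set c : ℝ := inner ℝ (P - B) (A' - A) with hc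
  have kA : ‖P - A‖ ^ 2 - ‖B - A‖ ^ 2 = 2 * (b * c) := by
    rw [key A, hXA, real_inner_smul_right]
  have kA' : ‖P - A'‖ ^ 2 - ‖B - A'‖ ^ 2 = 2 * ((b - 1) * c) := by
    rw [key A', hXA', real_inner_smul_right]
  rcases le_or_gt c 0 with hcle | hcgt
  · left
    rw [Metric.mem_closedBall]
    have hd : dist P A = ‖P - A‖ := dist_eq_norm P A
    have hd2 : dist A B = ‖B - A‖ := by rw [dist_comm, dist_eq_norm]
    rw [hd, hd2]
    nlinarith [norm_nonneg (P - A), norm_nonneg (B - A)]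
  · right
    rw [Metric.mem_closedBall]
    have hd : dist P A' = ‖P - A'‖ := dist_eq_norm P A'
    have hd2 : dist A' B = ‖B - A'‖ := by rw [dist_comm, dist_eq_norm]
    rw [hd, hd2]
    nlinarith [norm_nonneg (P - A'), norm_nonneg (B - A')]
end
end
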